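/- In the block setup on an Enriques surface, for each block i and each 1 ≤ j ≤ n_i − 1 there is a distinguished triangle L^i_{j+1} → R_{L^i_{j+1}}(L^i_j) → Q^i_{j,j+1}[-1], where R denotes right mutation and Q^i_{j,j+1} is the cokernel of the injection L^i_j ↪ L^i_{j+1}. -/

import Mathlib

/-!
The right mutation `R_{L^i_{j+1}}(L^i_j)` is presented by its defining triangle
`R → L^i_j → L^i_{j+1} ⊗ RHom(L^i_j, L^i_{j+1})^∨`; since
`RHom(L^i_j, L^i_{j+1}) ≅ K ⊕ K[-1]`, the third term is `L^i_{j+1} ⊕ L^i_{j+1}[1]` and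
the coevaluation map has components the canonical inclusion and a nonzero extension class.
-/

namespace Stmt10

open CategoryTheory Limits Pretriangulated

variable (K : Type) [Field K]
variable (C : Type) [Category C] [Preadditive C] [Linear K C]
  [HasZeroObject C] [HasShift C ℤ] [∀ n : ℤ, (shiftFunctor C n).Additive] [Pretriangulated C]

/-- Abstract model of the bounded derived category `D^b(X)` of an Enriques surface `X`
over an algebraically closed field `K` of characteristic `≠ 2`, together with a
semiorthogonal decomposition `D^b(X) = ⟨Ku(X,L), L⟩` where `L = ⟨L₁,…,L_c⟩` consists of
pairwise completely orthogonal blocks `L_i = ⟨L^i_1,…,L^i_{n_i}⟩` of exceptional line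
bundles, consecutive line bundles in a block differing by `(-2)`-curves forming an
`A`-type chain (so that `RHom(L^i_j, L^i_l) ≅ K ⊕ K[-1]` for `j < l`).  The Serre
functor satisfies `S² ≅ [4]` but `S ≇ [2]` (`ω_X` is `2`-torsion, nontrivial). -/
structure BlockSetup where
  /-- Serre functor of `D^b(X)` -/
  S : C ⥤ C
  Sequiv : S.IsEquivalence
  duality : ∀ A B : C, (A ⟶ B) ≃ₗ[K] Module.Dual K (B ⟶ S.obj A)
  /-- Enriques condition: `S_X² ≅ [4]`, `S_X ≇ [2]` -/
  Ssq : S ⋙ S ≅ shiftFunctor C (4 : ℤ)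
  Snottwo : IsEmpty (S ≅ shiftFunctor C (2 : ℤ))
  /-- all Hom spaces are finite dimensional -/
  findim : ∀ A B : C, FiniteDimensional K (A ⟶ B)
  /-- graded Hom's are bounded -/
  bdd : ∀ A B : C, (Function.support fun t : ℤ => Module.finrank K (A ⟶ B⟦t⟧)).Finite
  /-- number of blocks and their sizes -/
  c : ℕ
  n : Fin c → ℕ
  npos : ∀ i, 0 < n i
  /-- the exceptional line bundles `L^i_j` (index `j` starting at `0`) -/
  L : (i : Fin c) → Fin (n i) → C
  /-- each `L^i_j` is exceptional -/
  exc0 : ∀ i j, Module.finrank K (L i j ⟶ L i j) = 1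
  exct : ∀ i j (t : ℤ), t ≠ 0 → Module.finrank K (L i j ⟶ (L i j)⟦t⟧) = 0
  /-- `{L^i_1,…,L^i_{n_i}}` is an exceptional collection -/
  coll : ∀ i (j j' : Fin (n i)), j' < j → ∀ t : ℤ, Module.finrank K (L i j ⟶ (L i j')⟦t⟧) = 0
  /-- `RHom(L^i_j, L^i_l) ≅ K ⊕ K[-1]` for `j < l` (the line bundles differ by an
  effective `A`-type chain of `(-2)`-curves) -/
  chain0 : ∀ i (j l : Fin (n i)), j < l → Module.finrank K (L i j ⟶ L i l) = 1
  chain1 : ∀ i (j l : Fin (n i)), j < l → Module.finrank K (L i j ⟶ (L i l)⟦(1 : ℤ)⟧) = 1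
  chaint : ∀ i (j l : Fin (n i)), j < l → ∀ t : ℤ, t ≠ 0 → t ≠ 1 →
    Module.finrank K (L i j ⟶ (L i l)⟦t⟧) = 0
  /-- the blocks are completely orthogonal -/
  orth : ∀ i i', i ≠ i' → ∀ j j' (t : ℤ), Module.finrank K (L i j ⟶ (L i' j')⟦t⟧) = 0
  /-- the canonical inclusion `L^i_j ↪ L^i_l` -/
  incl : ∀ i (j l : Fin (n i)), (L i j ⟶ L i l)
  inclnz : ∀ i (j l : Fin (n i)), j ≤ l → incl i j l ≠ 0
  /-- the torsion quotients `Q^i_{j,l} = Coker(L^i_j ↪ L^i_l)` -/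
  Q : (i : Fin c) → (j l : Fin (n i)) → C
  Qmap : ∀ i (j l : Fin (n i)), (L i l ⟶ Q i j l)
  Qconn : ∀ i (j l : Fin (n i)), (Q i j l ⟶ (L i j)⟦(1 : ℤ)⟧)
  Qtri : ∀ i (j l : Fin (n i)), j < l →
    Triangle.mk (incl i j l) (Qmap i j l) (Qconn i j l) ∈ distTriang C

variable {K C}

namespace BlockSetup

variable (St : BlockSetup K C)

/-- first line bundle `L^i_1` of the `i`-th block. -/
def L1 (i : Fin St.c) : C := St.L i ⟨0, St.npos i⟩

/-- The Kuznetsov component `Ku(X,L) = L^⊥`. -/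
def Ku (F : C) : Prop :=
  ∀ (i : Fin St.c) (j : Fin (St.n i)) (t : ℤ), ∀ g : (St.L i j)⟦t⟧ ⟶ F, g = 0

/-- Membership in the subcategory `L` generated by the blocks: `L = {}^⊥(L^⊥)`
(valid since `L` is admissible). -/
def InL (F : C) : Prop :=
  ∀ G : C, St.Ku G → ∀ (t : ℤ) (f : F ⟶ G⟦t⟧), f = 0

/-- Membership in the single block `L_i`. -/
def InBlock (i : Fin St.c) (F : C) : Prop :=
  St.InL F ∧ ∀ i', i' ≠ i → ∀ (j : Fin (St.n i')) (t : ℤ),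
    (∀ f : F ⟶ (St.L i' j)⟦t⟧, f = 0) ∧ (∀ f : St.L i' j ⟶ F⟦t⟧, f = 0)

end BlockSetup

/-- The projection functor `ζ_K ∘ ζ^!_K` onto the Kuznetsov component: the right adjoint
of the inclusion, viewed as an endofunctor of the ambient category together with the
counit, characterized by the universal property. -/
structure KuProjection (St : BlockSetup K C) where
  P : C ⥤ C
  counit : P ⟶ 𝟭 C
  inKu : ∀ X : C, St.Ku (P.obj X)
  univ : ∀ F X : C, St.Ku F →
    Function.Bijective (fun g : F ⟶ P.obj X => g ≫ counit.app X)

/-- `S_i := ζ^!_K(L^i_1)`. -/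
def KuProjection.Sobj {St : BlockSetup K C} (pr : KuProjection St) (i : Fin St.c) : C :=
  pr.P.obj (St.L1 i)

/-- The Serre functor `S_L` of the admissible subcategory `L`, with quasi-inverse. -/
structure SerreOnL (St : BlockSetup K C) where
  mem : ∀ i j, St.InL (St.L i j)
  SL : ObjectProperty.FullSubcategory St.InL ⥤ ObjectProperty.FullSubcategory St.InL
  duality : ∀ A B : ObjectProperty.FullSubcategory St.InL,
    (A.obj ⟶ B.obj) ≃ₗ[K] Module.Dual K (B.obj ⟶ (SL.obj A).obj)
  SLinv : ObjectProperty.FullSubcategory St.InL ⥤ ObjectProperty.FullSubcategory St.InL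
  invl : SLinv ⋙ SL ≅ 𝟭 _
  invr : SL ⋙ SLinv ≅ 𝟭 _

/-- `S_L^{-1}(L^i_1)`, as an object of the ambient category. -/
def SerreOnL.SLinvL1 {St : BlockSetup K C} (SD : SerreOnL St) (i : Fin St.c) : C :=
  (SD.SLinv.obj ⟨St.L1 i, SD.mem i ⟨0, St.npos i⟩⟩).obj

/-- A `3`-spherical object of `Ku(X,L)`: `RHom(F,F) ≅ K ⊕ K[-3]` and `S_{Ku}(F) ≅ F[3]`,
where `S_{Ku} = ζ^!_K ∘ S_X ∘ ζ_K`. -/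
def IsThreeSpherical (St : BlockSetup K C) (pr : KuProjection St) (F : C) : Prop :=
  Module.finrank K (F ⟶ F) = 1 ∧ Module.finrank K (F ⟶ F⟦(3 : ℤ)⟧) = 1 ∧
  (∀ t : ℤ, t ≠ 0 → t ≠ 3 → Module.finrank K (F ⟶ F⟦t⟧) = 0) ∧
  Nonempty (pr.P.obj (St.S.obj F) ≅ F⟦(3 : ℤ)⟧)

/-- A `3`-pseudoprojective object of `Ku(X,L)`:
`RHom(F,F) ≅ K ⊕ K[-1] ⊕ K[-2] ⊕ K[-3]` and `S_{Ku}(F) ≅ F[3]`. -/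
def IsThreePseudoprojective (St : BlockSetup K C) (pr : KuProjection St) (F : C) : Prop :=
  (∀ t : ℤ, 0 ≤ t → t ≤ 3 → Module.finrank K (F ⟶ F⟦t⟧) = 1) ∧
  (∀ t : ℤ, t < 0 ∨ 3 < t → Module.finrank K (F ⟶ F⟦t⟧) = 0) ∧
  Nonempty (pr.P.obj (St.S.obj F) ≅ F⟦(3 : ℤ)⟧)

/-- Euler pairing `χ(E,F) = Σ_t (-1)^t dim Hom(E, F[t])`. -/
noncomputable def chi (E F : C) : ℤ :=
  ∑ᶠ t : ℤ, ((-1 : ℤ) ^ t.natAbs) * (Module.finrank K (E ⟶ F⟦t⟧) : ℤ)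

/-!
Write `A = L^i_j`, `B = L^i_{j+1}` and `ι : A ⟶ B` for the inclusion. The category is only
pretriangulated, so instead of the octahedral axiom we compare cones by hand: let `Z` be the cone
of `inr ≫ conn : B⟦1⟧ ⟶ R⟦1⟧`. Projecting `B ⊞ B⟦1⟧` onto `B` gives `φ : Z ⟶ Q`, and the
inclusion of `B` gives `χ : Q ⟶ Z`. They are mutually inverse because `Hom(A⟦1⟧, Q)`,
`Hom(A⟦1⟧, Z)` and `Hom(B⟦2⟧, Z)` vanish; this uses `End A = K`, `Hom(A, B⟦1⟧) = K ε`, the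
vanishing of `Hom(A⟦1⟧, B)`, `Hom(B⟦1⟧, A)`, `Hom(B⟦2⟧, B)`, and `ε ≫ inr ≫ conn ≠ 0`.
Shifting the triangle `B⟦1⟧ ⟶ R⟦1⟧ ⟶ Z ≅ Q` by `-1` gives the result.
-/

section Pretriangulated

lemma subsingleton_shift_hom {D : Type*} [Category D] [HasShift D ℤ] {X Y : D} {n : ℤ}
    (h : Subsingleton (X ⟶ Y⟦-n⟧)) : Subsingleton (X⟦n⟧ ⟶ Y) :=
  @Equiv.subsingleton _ _ ((shiftEquiv D n).toAdjunction.homEquiv X Y) h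

lemma eq_zero_of_comp_eq_zero_of_finrank_eq_one {D : Type*} [Category D] [Preadditive D]
    [Linear K D] {X Y W : D}
    (h : Module.finrank K (X ⟶ Y) = 1) {g : X ⟶ Y} {f : Y ⟶ W} (hgf : g ≫ f ≠ 0)
    {v : X ⟶ Y} (hv : v ≫ f = 0) : v = 0 := by
  obtain ⟨c, rfl⟩ := (finrank_eq_one_iff_of_nonzero' g (by rintro rfl; simp at hgf)).mp h v
  rw [Linear.smul_comp] at hv
  rw [(smul_eq_zero.mp hv).resolve_right hgf, zero_smul]

lemma eq_zero_of_comp_eq_zero_of_finrank_end_eq_one {D : Type*} [Category D] [Preadditive D]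
    [Linear K D] {X W : D} (h : Module.finrank K (X ⟶ X) = 1) {f : X ⟶ W} (hf : f ≠ 0)
    {v : X ⟶ X} (hv : v ≫ f = 0) : v = 0 :=
  eq_zero_of_comp_eq_zero_of_finrank_eq_one h (g := 𝟙 X) (by simpa using hf) hv

variable {T : Triangle C}

lemma hom_ext_of_distTriang (hT : T ∈ distTriang C) {X : C}
    (hX : Subsingleton (T.obj₁⟦(1 : ℤ)⟧ ⟶ X)) {f g : T.obj₃ ⟶ X}
    (h : T.mor₂ ≫ f = T.mor₂ ≫ g) : f = g := by
  obtain ⟨u, hu⟩ := Triangle.yoneda_exact₃ T hT (f - g) (by rw [Preadditive.comp_sub, h, sub_self])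
  rw [Subsingleton.elim u 0, comp_zero] at hu
  exact sub_eq_zero.mp hu

lemma subsingleton_shift_hom_obj₃ (hT : T ∈ distTriang C) {V : C}
    (h₂ : ∀ g : V⟦(1 : ℤ)⟧ ⟶ T.obj₂, g ≫ T.mor₂ = 0)
    (h₁ : ∀ v : V ⟶ T.obj₁, v ≫ T.mor₁ = 0 → v = 0) :
    Subsingleton (V⟦(1 : ℤ)⟧ ⟶ T.obj₃) := by
  suffices ∀ g : V⟦(1 : ℤ)⟧ ⟶ T.obj₃, g = 0 from ⟨fun g g' => (this g).trans (this g').symm⟩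
  intro g
  obtain ⟨v, hv⟩ := (shiftFunctor C (1 : ℤ)).map_surjective (g ≫ T.mor₃)
  have hv₀ : v = 0 := h₁ v <| (shiftFunctor C (1 : ℤ)).map_injective <| by
    rw [Functor.map_comp, hv, Category.assoc, comp_distTriang_mor_zero₃₁ T hT, comp_zero,
      Functor.map_zero]
  obtain ⟨u, rfl⟩ := Triangle.coyoneda_exact₃ T hT g (by rw [← hv, hv₀, Functor.map_zero])
  exact h₂ u

lemma subsingleton_shift_obj₁_hom_obj₃ (hT : T ∈ distTriang C)
    (h : Module.finrank K (T.obj₁ ⟶ T.obj₁) = 1) (h₁ : T.mor₁ ≠ 0)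
    (h₂ : Subsingleton (T.obj₁⟦(1 : ℤ)⟧ ⟶ T.obj₂)) : Subsingleton (T.obj₁⟦(1 : ℤ)⟧ ⟶ T.obj₃) :=
  subsingleton_shift_hom_obj₃ hT (fun g => by rw [Subsingleton.elim g 0, zero_comp])
    fun _ => eq_zero_of_comp_eq_zero_of_finrank_end_eq_one h h₁

lemma exists_distTriang_of_iso (hT : T ∈ distTriang C) {X Y W : C}
    (e₁ : X ≅ T.obj₁) (e₂ : Y ≅ T.obj₂) (e₃ : W ≅ T.obj₃) :
    ∃ (a : X ⟶ Y) (b : Y ⟶ W) (c : W ⟶ X⟦(1 : ℤ)⟧), Triangle.mk a b c ∈ distTriang C := by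
  refine ⟨e₁.hom ≫ T.mor₁ ≫ e₂.inv, e₂.hom ≫ T.mor₂ ≫ e₃.inv, e₃.hom ≫ T.mor₃ ≫ e₁.inv⟦(1 : ℤ)⟧',
    isomorphic_distinguished _ hT _ (Triangle.isoMk _ _ e₁ e₂ e₃ ?_ ?_ ?_)⟩
  · show (e₁.hom ≫ T.mor₁ ≫ e₂.inv) ≫ e₂.hom = e₁.hom ≫ T.mor₁
    simp
  · show (e₂.hom ≫ T.mor₂ ≫ e₃.inv) ≫ e₃.hom = e₂.hom ≫ T.mor₂
    simp
  · show (e₃.hom ≫ T.mor₃ ≫ e₁.inv⟦(1 : ℤ)⟧') ≫ e₁.hom⟦(1 : ℤ)⟧' = e₃.hom ≫ T.mor₃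
    simp [← Functor.map_comp]

end Pretriangulated

section RightMutation

variable [HasBinaryBiproducts C] {A B Q R Z : C} {ι : A ⟶ B} {q : B ⟶ Q} {δ : Q ⟶ A⟦(1 : ℤ)⟧}
  {ε : A ⟶ B⟦(1 : ℤ)⟧} {r : R ⟶ A} {conn : B ⊞ B⟦(1 : ℤ)⟧ ⟶ R⟦(1 : ℤ)⟧}
  {p : R⟦(1 : ℤ)⟧ ⟶ Z} {w : Z ⟶ B⟦(1 : ℤ)⟧⟦(1 : ℤ)⟧}

lemma comp_inr_conn_ne_zero (hR : Triangle.mk r (biprod.lift ι ε) conn ∈ distTriang C)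
    (hA : Module.finrank K (A ⟶ A) = 1) (hι : ι ≠ 0) (hε : ε ≠ 0) :
    ε ≫ biprod.inr ≫ conn ≠ 0 := by
  intro h
  obtain ⟨v, hv⟩ : ∃ v : A ⟶ A, ε ≫ biprod.inr = v ≫ biprod.lift ι ε :=
    Triangle.coyoneda_exact₃ _ hR (ε ≫ biprod.inr) ((Category.assoc _ _ _).trans h)
  have hv₀ : v = 0 := eq_zero_of_comp_eq_zero_of_finrank_end_eq_one hA hι
    (by simpa using (hv =≫ biprod.fst).symm)
  exact hε (by simpa [hv₀] using hv =≫ biprod.snd)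

lemma comp_cone_eq_zero (hR : Triangle.mk r (biprod.lift ι ε) conn ∈ distTriang C)
    (hZ : Triangle.mk (biprod.inr ≫ conn) p w ∈ distTriang C) {V : C}
    [Subsingleton (V⟦(1 : ℤ)⟧ ⟶ B)] (hV : ∀ g : V ⟶ R, g ≫ r = 0)
    (g : V⟦(1 : ℤ)⟧ ⟶ R⟦(1 : ℤ)⟧) : g ≫ p = 0 := by
  obtain ⟨g₀, rfl⟩ := (shiftFunctor C (1 : ℤ)).map_surjective g
  obtain ⟨s, hs⟩ : ∃ s : V⟦(1 : ℤ)⟧ ⟶ B ⊞ B⟦(1 : ℤ)⟧, g₀⟦(1 : ℤ)⟧' = s ≫ conn :=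
    Triangle.coyoneda_exact₁ _ hR (g₀⟦(1 : ℤ)⟧')
      (by show g₀⟦(1 : ℤ)⟧' ≫ r⟦(1 : ℤ)⟧' = 0; rw [← Functor.map_comp, hV, Functor.map_zero])
  have hs' : s = (s ≫ biprod.snd) ≫ biprod.inr := by
    ext <;> simp [Subsingleton.elim (s ≫ biprod.fst) 0]
  have hZ₁₂ : (biprod.inr ≫ conn) ≫ p = 0 := comp_distTriang_mor_zero₁₂ _ hZ
  rw [hs, hs', Category.assoc, Category.assoc, ← Category.assoc biprod.inr, hZ₁₂, comp_zero]

lemma subsingleton_shift_left_hom_cone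
    (hR : Triangle.mk r (biprod.lift ι ε) conn ∈ distTriang C)
    (hZ : Triangle.mk (biprod.inr ≫ conn) p w ∈ distTriang C)
    (hA : Module.finrank K (A ⟶ A) = 1) (hAB : Module.finrank K (A ⟶ B⟦(1 : ℤ)⟧) = 1)
    (hι : ι ≠ 0) (hε : ε ≠ 0) [Subsingleton (A⟦(1 : ℤ)⟧ ⟶ B)] :
    Subsingleton (A⟦(1 : ℤ)⟧ ⟶ Z) := by
  have hrι : r ≫ ι = 0 := by
    have h : r ≫ biprod.lift ι ε = 0 := comp_distTriang_mor_zero₁₂ _ hR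
    simpa using h =≫ biprod.fst
  refine subsingleton_shift_hom_obj₃ hZ (comp_cone_eq_zero hR hZ fun g => ?_)
    fun _ => eq_zero_of_comp_eq_zero_of_finrank_eq_one hAB (comp_inr_conn_ne_zero hR hA hι hε)
  exact eq_zero_of_comp_eq_zero_of_finrank_end_eq_one hA hι
    (by rw [Category.assoc, hrι, comp_zero])

lemma subsingleton_shift_right_hom_cone
    (hR : Triangle.mk r (biprod.lift ι ε) conn ∈ distTriang C)
    (hZ : Triangle.mk (biprod.inr ≫ conn) p w ∈ distTriang C)
    [Subsingleton (B⟦(1 : ℤ)⟧ ⟶ A)] [Subsingleton (B⟦(1 : ℤ)⟧⟦(1 : ℤ)⟧ ⟶ B)] :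
    Subsingleton (B⟦(1 : ℤ)⟧⟦(1 : ℤ)⟧ ⟶ Z) := by
  refine subsingleton_shift_hom_obj₃ hZ (comp_cone_eq_zero hR hZ fun _ => Subsingleton.elim _ _)
    fun (t : B⟦(1 : ℤ)⟧ ⟶ B⟦(1 : ℤ)⟧) ht => ?_
  obtain ⟨v, hv⟩ : ∃ v : B⟦(1 : ℤ)⟧ ⟶ A, t ≫ biprod.inr = v ≫ biprod.lift ι ε :=
    Triangle.coyoneda_exact₃ _ hR _ ((Category.assoc _ _ _).trans ht)
  have htinr : t ≫ (biprod.inr : _ ⟶ B ⊞ _) = 0 := by rw [hv, Subsingleton.elim v 0, zero_comp]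
  exact (by simpa using htinr =≫ biprod.snd : t = 0)

lemma nonempty_cone_iso (hQ : Triangle.mk ι q δ ∈ distTriang C)
    (hR : Triangle.mk r (biprod.lift ι ε) conn ∈ distTriang C)
    (hZ : Triangle.mk (biprod.inr ≫ conn) p w ∈ distTriang C)
    (hA : Module.finrank K (A ⟶ A) = 1) (hAB : Module.finrank K (A ⟶ B⟦(1 : ℤ)⟧) = 1)
    (hι : ι ≠ 0) (hε : ε ≠ 0) [Subsingleton (A⟦(1 : ℤ)⟧ ⟶ B)] [Subsingleton (B⟦(1 : ℤ)⟧ ⟶ A)]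
    [Subsingleton (B⟦(1 : ℤ)⟧⟦(1 : ℤ)⟧ ⟶ B)] : Nonempty (Z ≅ Q) := by
  have hAQ : Subsingleton (A⟦(1 : ℤ)⟧ ⟶ Q) := subsingleton_shift_obj₁_hom_obj₃ hQ hA hι ‹_›
  have hAZ := subsingleton_shift_left_hom_cone hR hZ hA hAB hι hε
  have hBZ := subsingleton_shift_right_hom_cone hR hZ
  have hιq : ι ≫ q = 0 := comp_distTriang_mor_zero₁₂ _ hQ
  have hconn : biprod.lift ι ε ≫ conn = 0 := comp_distTriang_mor_zero₂₃ _ hR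
  have hinr : biprod.inr ≫ conn ≫ p = 0 :=
    (Category.assoc _ _ _).symm.trans (comp_distTriang_mor_zero₁₂ _ hZ)
  obtain ⟨ψ, hψ⟩ : ∃ ψ : R⟦(1 : ℤ)⟧ ⟶ Q, biprod.fst ≫ q = conn ≫ ψ :=
    Triangle.yoneda_exact₃ _ hR _ (show biprod.lift ι ε ≫ biprod.fst ≫ q = 0 by simp [hιq])
  obtain ⟨φ, hφ⟩ : ∃ φ : Z ⟶ Q, ψ = p ≫ φ :=
    Triangle.yoneda_exact₂ _ hZ ψ (show (biprod.inr ≫ conn) ≫ ψ = 0 by simp [← hψ])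
  obtain ⟨χ, hχ⟩ : ∃ χ : Q ⟶ Z, biprod.inl ≫ conn ≫ p = q ≫ χ :=
    Triangle.yoneda_exact₂ _ hQ _ (show ι ≫ biprod.inl ≫ conn ≫ p = 0 by
      simpa [biprod.lift_eq, hinr] using hconn =≫ p)
  have hψχ : ψ ≫ χ = p := hom_ext_of_distTriang (rot_of_distTriang _ hR) hAZ
    (show conn ≫ ψ ≫ χ = conn ≫ p from biprod.hom_ext' _ _
      (by simp [← reassoc_of% hψ, hχ]) (by simp [← reassoc_of% hψ, hinr]))
  exact ⟨{ hom := φ, inv := χ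
           hom_inv_id := hom_ext_of_distTriang hZ hBZ
             (show p ≫ φ ≫ χ = p ≫ 𝟙 Z by rw [← reassoc_of% hφ, hψχ, Category.comp_id])
           inv_hom_id := hom_ext_of_distTriang hQ hAQ
             (show q ≫ χ ≫ φ = q ≫ 𝟙 Q by simp [← reassoc_of% hχ, ← hφ, ← hψ]) }⟩

theorem exists_distTriang_of_rightMutation (hQ : Triangle.mk ι q δ ∈ distTriang C)
    (hR : Triangle.mk r (biprod.lift ι ε) conn ∈ distTriang C)
    (hA : Module.finrank K (A ⟶ A) = 1) (hAB : Module.finrank K (A ⟶ B⟦(1 : ℤ)⟧) = 1)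
    (hι : ι ≠ 0) (hε : ε ≠ 0) [Subsingleton (A⟦(1 : ℤ)⟧ ⟶ B)] [Subsingleton (B⟦(1 : ℤ)⟧ ⟶ A)]
    [Subsingleton (B⟦(1 : ℤ)⟧⟦(1 : ℤ)⟧ ⟶ B)] :
    ∃ (a : B ⟶ R) (b : R ⟶ Q⟦(-1 : ℤ)⟧) (c : Q⟦(-1 : ℤ)⟧ ⟶ B⟦(1 : ℤ)⟧),
      Triangle.mk a b c ∈ distTriang C := by
  obtain ⟨Z, p, w, hZ⟩ := distinguished_cocone_triangle (biprod.inr ≫ conn)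
  obtain ⟨e⟩ := nonempty_cone_iso hQ hR hZ hA hAB hι hε
  let unshift (X : C) : X⟦(1 : ℤ)⟧⟦(-1 : ℤ)⟧ ≅ X :=
    (shiftFunctorCompIsoId C (1 : ℤ) (-1) (by norm_num)).app X
  exact exists_distTriang_of_iso (Triangle.shift_distinguished _ hZ (-1))
    (unshift B).symm (unshift R).symm ((shiftFunctor C (-1 : ℤ)).mapIso e.symm)

end RightMutation

theorem right_mutation_triangle [HasBinaryBiproducts C]
    (St : BlockSetup K C) (i : Fin St.c) (j : ℕ) (hj : j + 1 < St.n i) :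
    -- indices `j` and `j+1` in the `i`-th block
    let j₀ : Fin (St.n i) := ⟨j, Nat.lt_of_succ_lt hj⟩
    let j₁ : Fin (St.n i) := ⟨j + 1, hj⟩
    -- the right mutation `R := R_{L^i_{j+1}}(L^i_j)`, given by its defining triangle
    ∀ (R : C) (r : R ⟶ St.L i j₀) (ε : St.L i j₀ ⟶ (St.L i j₁)⟦(1 : ℤ)⟧) (hε : ε ≠ 0)
      (conn : St.L i j₁ ⊞ (St.L i j₁)⟦(1 : ℤ)⟧ ⟶ R⟦(1 : ℤ)⟧),
      (Triangle.mk r (biprod.lift (St.incl i j₀ j₁) ε) conn ∈ distTriang C) →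
      -- conclusion: a distinguished triangle `L^i_{j+1} → R → Q^i_{j,j+1}[-1]`
      ∃ (a : St.L i j₁ ⟶ R) (b : R ⟶ (St.Q i j₀ j₁)⟦(-1 : ℤ)⟧)
        (h : (St.Q i j₀ j₁)⟦(-1 : ℤ)⟧ ⟶ (St.L i j₁)⟦(1 : ℤ)⟧),
        Triangle.mk a b h ∈ distTriang C := by
  intro j₀ j₁ R r ε hε conn hR
  have hlt : j₀ < j₁ := Nat.lt_succ_self j
  have := St.findim
  have : Subsingleton ((St.L i j₀)⟦(1 : ℤ)⟧ ⟶ St.L i j₁) := subsingleton_shift_hom <|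
    Module.finrank_zero_iff.mp (St.chaint i j₀ j₁ hlt (-1) (by norm_num) (by norm_num))
  have : Subsingleton ((St.L i j₁)⟦(1 : ℤ)⟧ ⟶ St.L i j₀) := subsingleton_shift_hom <|
    Module.finrank_zero_iff.mp (St.coll i j₁ j₀ hlt (-1))
  have : Subsingleton (St.L i j₁ ⟶ (St.L i j₁)⟦(-2 : ℤ)⟧) :=
    Module.finrank_zero_iff.mp (St.exct i j₁ (-2) (by norm_num))
  have : Subsingleton ((St.L i j₁)⟦(1 : ℤ)⟧⟦(1 : ℤ)⟧ ⟶ St.L i j₁) :=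
    subsingleton_shift_hom <| subsingleton_shift_hom <|
      ((Iso.refl _).homCongr
        ((shiftFunctorAdd' C (-1) (-1) (-2) (by norm_num)).app _)).symm.subsingleton
  exact exists_distTriang_of_rightMutation (St.Qtri i j₀ j₁ hlt) hR (St.exc0 i j₀)
    (St.chain1 i j₀ j₁ hlt) (St.inclnz i j₀ j₁ hlt.le) hε

end Stmt10
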